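/- Type preservation for encoding strictly covariant record subtyping as presence polymorphism: the global type-only translation ⟦-⟧ from λ_{[]}^{≤co} to λ_{[]}^{θ}, which translates [ℓ_i:A_i]_i to ∀(θ_i)_i (θ̄_i)_i.[ℓ_i^{θ_i} : ⟦A_i, θ̄_i⟧]_i and A → B to ∀θ̄.⟦A⟧ → ⟦B, θ̄⟧ (hoisting all presence quantifiers in strictly covariant positions to the top level), maps every well-typed Δ;Γ ⊢ M : A in λ_{[]}^{≤co} to a well-typed Δ;⟦Γ⟧ ⊢ ⟦M⟧ : ⟦A⟧ in λ_{[]}^{θ}. -/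

import Mathlib

namespace Stmt16

abbrev Label := ℕ

/-- Source types of λ_{[]}^{≤co}. -/
inductive Ty : Type where
  | tvar : ℕ → Ty
  | arrow : Ty → Ty → Ty
  | record : List (Label × Ty) → Ty

/-- Presence annotations of the target calculus λ_{[]}^{θ}. -/
inductive Pre : Type where
  | abs : Pre
  | pres : Pre
  | pvar : ℕ → Pre

/-- Target types. -/
inductive PTy : Type where
  | tvar : ℕ → PTy
  | arrow : PTy → PTy → PTy
  | record : List (Label × Pre × PTy) → PTy
  | pall : PTy → PTy

/-- n-fold presence quantification. -/
def pallN : ℕ → PTy → PTy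
  | 0, A => A
  | n + 1, A => .pall (pallN n A)

mutual
/-- The number of presence variables generated for the strictly covariant
positions of a type (one per label of a strictly covariant record, plus those
of its components). -/
def npres : Ty → ℕ
  | .tvar _ => 0
  | .arrow _ B => npres B
  | .record R => npresRow R
def npresRow : List (Label × Ty) → ℕ
  | [] => 0
  | (_, A) :: R => 1 + npres A + npresRow R
end

/-- [pvar (n-1), …, pvar 0]: the bound presence variables of n quantifiers,
outermost first. -/
def varList (n : ℕ) : List Pre := (List.range n).reverse.map Pre.pvar

mutual
/-- ⟦A, P̄⟧: the body of the translation ⟦A⟧ with its top-level (hoisted)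
presence quantifiers instantiated by the list P̄.  In a record, the first
|R| presences are the annotations of the labels and the rest are distributed
over the components; quantifiers of strictly covariant positions are hoisted
to the top level. -/
def trTyBody : Ty → List Pre → PTy
  | .tvar n, _ => .tvar n
  | .arrow A B, Ps =>
      .arrow (pallN (npres A) (trTyBody A (varList (npres A)))) (trTyBody B Ps)
  | .record R, Ps =>
      .record (trRowBody R (Ps.take R.length) (Ps.drop R.length))
def trRowBody : List (Label × Ty) → List Pre → List Pre → List (Label × Pre × PTy)
  | [], _, _ => []
  | (ℓ, A) :: R, Pl, Pc =>
      (ℓ, Pl.headD Pre.abs, trTyBody A (Pc.take (npres A))) ::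
        trRowBody R Pl.tail (Pc.drop (npres A))
end

/-- ⟦A⟧ = ∀θ̄.⟦A, θ̄⟧: the type translation from λ_{[]}^{≤co} to λ_{[]}^{θ}. -/
def trTy (A : Ty) : PTy := pallN (npres A) (trTyBody A (varList (npres A)))

/-! ### Strictly covariant subtyping derivations (as data), and the
computation ρ_θ(A ≤ B) of the presence instantiations. -/

mutual
/-- Strictly covariant record subtyping: width subtyping propagated through
record components and function codomains only. -/
inductive CoSub : Ty → Ty → Type where
  | tvar (n : ℕ) : CoSub (.tvar n) (.tvar n)
  | arrow {A B B'} : CoSub B B' → CoSub (.arrow A B) (.arrow A B')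
  | record {R R'} : CoSubRow R R' → CoSub (.record R) (.record R')
/-- Row subtyping, with labels in canonical order: each field of the subtype
row is either dropped or kept (with a componentwise subtyping). -/
inductive CoSubRow : List (Label × Ty) → List (Label × Ty) → Type where
  | nil : CoSubRow [] []
  | drop {ℓ A R R'} : CoSubRow R R' → CoSubRow ((ℓ, A) :: R) R'
  | keep {ℓ A A' R R'} : CoSub A A' → CoSubRow R R' →
      CoSubRow ((ℓ, A) :: R) ((ℓ, A') :: R')
end

/-- The presence annotations for the labels of the subtype row: dropped labels
become absent, kept labels receive the fresh presence variable corresponding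
to their slot (k counts the slots of the supertype, n is the total number of
binders). -/
def coSubRowLab : {R R' : List (Label × Ty)} → CoSubRow R R' → (n k : ℕ) → List Pre
  | _, _, .nil, _, _ => []
  | _, _, .drop sr, n, k => Pre.abs :: coSubRowLab sr n k
  | _, _, .keep _ sr, n, k => Pre.pvar (n - 1 - k) :: coSubRowLab sr n (k + 1)

mutual
/-- ρ_θ(A ≤ B): the instantiation P̄ of the hoisted quantifiers of ⟦A⟧ that
produces ⟦B⟧ (n = total number of binders of ⟦B⟧, j = offset of the slots of
the current subterm of B). -/
def coSubPres : {A B : Ty} → CoSub A B → (n j : ℕ) → List Pre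
  | _, _, .tvar _, _, _ => []
  | _, _, .arrow s, n, j => coSubPres s n j
  | _, _, .record (R' := R') sr, n, j =>
      coSubRowLab sr n j ++ coSubRowComp sr n (j + R'.length)
def coSubRowComp : {R R' : List (Label × Ty)} → CoSubRow R R' → (n c : ℕ) → List Pre
  | _, _, .nil, _, _ => []
  | _, _, .drop (A := A) sr, n, c =>
      List.replicate (npres A) Pre.abs ++ coSubRowComp sr n c
  | _, _, .keep (A' := A') s sr, n, c =>
      coSubPres s n c ++ coSubRowComp sr n (c + npres A')
end

/-- Shift presence variables ≥ c up by one. -/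
def shiftPre (c : ℕ) : Pre → Pre
  | .pvar n => if n < c then .pvar n else .pvar (n + 1)
  | p => p

mutual
def shiftPTy (c : ℕ) : PTy → PTy
  | .tvar n => .tvar n
  | .arrow A B => .arrow (shiftPTy c A) (shiftPTy c B)
  | .record es => .record (shiftPEs c es)
  | .pall A => .pall (shiftPTy (c + 1) A)
def shiftPEs (c : ℕ) : List (Label × Pre × PTy) → List (Label × Pre × PTy)
  | [] => []
  | (ℓ, P, A) :: es => (ℓ, shiftPre c P, shiftPTy c A) :: shiftPEs c es
end

/-- Substitute presence type P for presence variable k. -/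
def substPre (k : ℕ) (P : Pre) : Pre → Pre
  | .pvar n => if n = k then P else if n < k then .pvar n else .pvar (n - 1)
  | p => p

mutual
def substPTy (k : ℕ) (P : Pre) : PTy → PTy
  | .tvar n => .tvar n
  | .arrow A B => .arrow (substPTy k P A) (substPTy k P B)
  | .record es => .record (substPEs k P es)
  | .pall A => .pall (substPTy (k + 1) (shiftPre 0 P) A)
def substPEs (k : ℕ) (P : Pre) : List (Label × Pre × PTy) → List (Label × Pre × PTy)
  | [] => []
  | (ℓ, Q, A) :: es => (ℓ, substPre k P Q, substPTy k P A) :: substPEs k P es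
end

/-- Type equivalence: rows are compared ignoring label order and absent labels. -/
inductive PTyEquiv : PTy → PTy → Prop where
  | refl (A) : PTyEquiv A A
  | symm {A B} : PTyEquiv A B → PTyEquiv B A
  | trans {A B C} : PTyEquiv A B → PTyEquiv B C → PTyEquiv A C
  | arrow {A A' B B'} : PTyEquiv A A' → PTyEquiv B B' →
      PTyEquiv (.arrow A B) (.arrow A' B')
  | pall {A A'} : PTyEquiv A A' → PTyEquiv (.pall A) (.pall A')
  | recordCongr {es es'} :
      es.map (fun q => (q.1, q.2.1)) = es'.map (fun q => (q.1, q.2.1)) →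
      (∀ (i : ℕ) p q, es[i]? = some p → es'[i]? = some q →
        PTyEquiv p.2.2 q.2.2) →
      PTyEquiv (.record es) (.record es')
  | recordPerm {es es'} : List.Perm es es' →
      PTyEquiv (.record es) (.record es')
  | recordAbsent {es₁ es₂ ℓ A} :
      PTyEquiv (.record (es₁ ++ (ℓ, Pre.abs, A) :: es₂)) (.record (es₁ ++ es₂))

/-- Target terms: records annotated with their (presence-annotated) type,
presence abstraction Λθ.M and presence application M P. -/
inductive PTm : Type where
  | var : ℕ → PTm
  | lam : PTy → PTm → PTm
  | app : PTm → PTm → PTm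
  | record : List (Label × PTm) → PTy → PTm
  | proj : PTm → Label → PTm
  | plam : PTm → PTm
  | papp : PTm → Pre → PTm

/-- Typing of λ_{[]}^{θ}. -/
inductive PHasTy : List PTy → PTm → PTy → Prop where
  | var {Γ n A} : Γ[n]? = some A → PHasTy Γ (.var n) A
  | lam {Γ A B M} : PHasTy (A :: Γ) M B → PHasTy Γ (.lam A M) (.arrow A B)
  | app {Γ A B M N} : PHasTy Γ M (.arrow A B) → PHasTy Γ N A → PHasTy Γ (.app M N) B
  | record {Γ} {es : List (Label × PTm)} {res : List (Label × Pre × PTy)} :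
      es.map Prod.fst = res.map Prod.fst →
      (∀ (i : ℕ) p q, es[i]? = some p → res[i]? = some q →
        PHasTy Γ (Prod.snd p) (Prod.snd (Prod.snd q))) →
      PHasTy Γ (.record es (.record res)) (.record res)
  | proj {Γ res M ℓ A} : PHasTy Γ M (.record res) →
      List.lookup ℓ res = some (Pre.pres, A) →
      PHasTy Γ (.proj M ℓ) A
  | plam {Γ M A} : PHasTy (Γ.map (shiftPTy 0)) M A → PHasTy Γ (.plam M) (.pall A)
  | papp {Γ M A P} : PHasTy Γ M (.pall A) → PHasTy Γ (.papp M P) (substPTy 0 P A)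
  | conv {Γ M A A'} : PHasTy Γ M A → PTyEquiv A A' → PHasTy Γ M A'

/-- n-fold presence abstraction. -/
def plamN : ℕ → PTm → PTm
  | 0, M => M
  | n + 1, M => .plam (plamN n M)

/-- Iterated presence application (leftmost argument instantiates the
outermost quantifier). -/
def papps (M : PTm) (Ps : List Pre) : PTm := Ps.foldl (fun m p => .papp m p) M

/-! ### Source terms and typing derivations of λ_{[]}^{≤co}. -/

/-- Source terms; `upcast M B` is M ▷ B. -/
inductive Tm : Type where
  | var : ℕ → Tm
  | lam : Ty → Tm → Tm
  | app : Tm → Tm → Tm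
  | record : List (Label × Tm) → Tm
  | proj : Tm → Label → Tm
  | upcast : Tm → Ty → Tm

mutual
inductive Deriv : List Ty → Tm → Ty → Type where
  | var {Γ n A} : Γ[n]? = some A → Deriv Γ (.var n) A
  | lam {Γ A B M} : Deriv (A :: Γ) M B → Deriv Γ (.lam A M) (.arrow A B)
  | app {Γ A B M N} : Deriv Γ M (.arrow A B) → Deriv Γ N A → Deriv Γ (.app M N) B
  | record {Γ es R} : DerivRow Γ es R → Deriv Γ (.record es) (.record R)
  | proj {Γ R M ℓ A} : Deriv Γ M (.record R) → List.lookup ℓ R = some A →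
      Deriv Γ (.proj M ℓ) A
  | upcast {Γ M A B} : Deriv Γ M A → CoSub A B → Deriv Γ (.upcast M B) B
inductive DerivRow : List Ty → List (Label × Tm) → List (Label × Ty) → Type where
  | nil {Γ} : DerivRow Γ [] []
  | cons {Γ ℓ M A es R} : Deriv Γ M A → DerivRow Γ es R →
      DerivRow Γ ((ℓ, M) :: es) ((ℓ, A) :: R)
end

/-! ### The global type-only translation from λ_{[]}^{≤co} to λ_{[]}^{θ}:
presence quantifiers of strictly covariant positions are hoisted to the top
level by instantiation and re-abstraction. -/

/-- The m presence variables for the absolute slots c, …, c+m-1 out of n. -/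
def slotVars (n c m : ℕ) : List Pre :=
  (List.range m).map (fun i => Pre.pvar (n - 1 - (c + i)))

/-- The component presence arguments used when projecting label ℓ: the
projected component receives fresh variables, all other components are
instantiated absent. -/
def projCompArgs (ℓ : Label) : List (Label × Ty) → List Pre
  | [] => []
  | (ℓ', A) :: R =>
      (if ℓ' == ℓ then varList (npres A) else List.replicate (npres A) Pre.abs)
        ++ projCompArgs ℓ R

mutual
/-- The term translation on derivations. -/
def trD : {Γ : List Ty} → {M : Tm} → {A : Ty} → Deriv Γ M A → PTm
  | _, _, _, .var (n := n) _ => .var n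
  | _, _, _, .lam (A := A) (B := B) d =>
      plamN (npres B) (.lam (trTy A) (papps (trD d) (varList (npres B))))
  | _, _, _, .app (B := B) d₁ d₂ =>
      plamN (npres B) (.app (papps (trD d₁) (varList (npres B))) (trD d₂))
  | _, _, _, .record (R := R) dr =>
      plamN (npresRow R)
        (.record (trDRow dr (npresRow R) R.length)
          (.record (trRowBody R ((varList (npresRow R)).take R.length)
            ((varList (npresRow R)).drop R.length))))
  | _, _, _, .proj (R := R) (ℓ := ℓ) (A := A) d _ =>
      plamN (npres A)
        (.proj (papps (trD d)
          ((R.map (fun p => if p.1 == ℓ then Pre.pres else Pre.abs)) ++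
            projCompArgs ℓ R)) ℓ)
  | _, _, _, .upcast (B := B) d s =>
      plamN (npres B) (papps (trD d) (coSubPres s (npres B) 0))
def trDRow : {Γ : List Ty} → {es : List (Label × Tm)} → {R : List (Label × Ty)} →
    DerivRow Γ es R → (n c : ℕ) → List (Label × PTm)
  | _, _, _, .nil, _, _ => []
  | _, _, _, .cons (ℓ := ℓ) (A := A) d dr, n, c =>
      (ℓ, papps (trD d) (slotVars n c (npres A))) :: trDRow dr n (c + npres A)
end

/-!
Every presence quantifier occurring inside `⟦A, P̄⟧` binds a closed type, so presence shifting
and substitution act on `⟦A, P̄⟧` through the list `P̄` alone. Hence instantiating the hoisted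
quantifiers of `⟦A⟧` by `P̄` yields `⟦A, P̄⟧`, and re-abstracting is sound because `⟦Γ⟧` is closed;
every translated term is such an instantiation followed by a re-abstraction. For an upcast along
`A ≤ B`, `ρ(A ≤ B)` makes the dropped labels absent and gives each kept label the variable of its
slot in `⟦B⟧`, so `⟦A, ρ(A ≤ B)⟧` becomes `⟦B, θ̄⟧` once the absent fields are erased.
-/

theorem _root_.List.Forall₂.rel_of_getElem? {α β : Type*} {R : α → β → Prop} {l : List α}
    {l' : List β} (h : List.Forall₂ R l l') {i : ℕ} {a : α} {b : β} (ha : l[i]? = some a)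
    (hb : l'[i]? = some b) : R a b := by
  induction h generalizing i with
  | nil => simp at ha
  | cons hab _ ih =>
    cases i with
    | zero =>
      simp only [List.getElem?_cons_zero, Option.some.injEq] at ha hb
      exact ha ▸ hb ▸ hab
    | succ i => exact ih ha hb

theorem _root_.List.Forall₂.map_eq_map {α β γ : Type*} {f : α → γ} {g : β → γ} {l : List α}
    {l' : List β} (h : List.Forall₂ (fun a b => f a = g b) l l') : l.map f = l'.map g := by
  induction h <;> simp [*]

theorem varList_length (n : ℕ) : (varList n).length = n := by
  simp [varList]

theorem varList_succ (n : ℕ) : varList (n + 1) = Pre.pvar n :: varList n := by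
  simp [varList, List.range_succ]

theorem varList_map_eq_self {n : ℕ} {f : Pre → Pre}
    (h : ∀ i < n, f (Pre.pvar i) = Pre.pvar i) : (varList n).map f = varList n := by
  induction n with
  | zero => rfl
  | succ n ih => rw [varList_succ, List.map_cons, h n n.lt_succ_self, ih fun i hi => h i (by omega)]

theorem slotVars_length (n c m : ℕ) : (slotVars n c m).length = m := by
  simp [slotVars]

theorem slotVars_succ (n c m : ℕ) :
    slotVars n c (m + 1) = .pvar (n - 1 - c) :: slotVars n (c + 1) m := by
  apply List.ext_getElem
  · simp [slotVars_length]
  · intro i _ _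
    cases i <;> simp [slotVars]
    omega

theorem slotVars_take {n c m k : ℕ} (h : k ≤ m) : (slotVars n c m).take k = slotVars n c k := by
  simp [slotVars, ← List.map_take, List.take_range, Nat.min_eq_left h]

theorem slotVars_drop (n c m k : ℕ) :
    (slotVars n c m).drop k = slotVars n (c + k) (m - k) := by
  apply List.ext_getElem
  · simp [slotVars_length]
  · intro i _ _
    simp [slotVars]
    omega

theorem slotVars_eq_varList {n c m : ℕ} (h : c + m = n) : slotVars n c m = varList m := by
  apply List.ext_getElem
  · simp [slotVars_length, varList_length]
  · intro i _ _
    simp [slotVars, varList]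
    omega

def npresComps : List (Label × Ty) → ℕ
  | [] => 0
  | (_, A) :: R => npres A + npresComps R

theorem npresRow_eq (R : List (Label × Ty)) : npresRow R = R.length + npresComps R := by
  induction R with
  | nil => rfl
  | cons p R ih => rw [npresRow, npresComps, ih, List.length_cons]; omega

theorem coSubRowLab_length : ∀ {R R' : List (Label × Ty)} (sr : CoSubRow R R') (n k : ℕ),
    (coSubRowLab sr n k).length = R.length
  | _, _, .nil, _, _ => rfl
  | _, _, .drop sr, n, k => by simp [coSubRowLab, coSubRowLab_length sr]
  | _, _, .keep _ sr, n, k => by simp [coSubRowLab, coSubRowLab_length sr]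

mutual

theorem coSubPres_length : ∀ {A B : Ty} (s : CoSub A B) (n j : ℕ),
    (coSubPres s n j).length = npres A
  | _, _, .tvar _, _, _ => rfl
  | _, _, .arrow s, n, j => by rw [coSubPres, coSubPres_length s, npres]
  | _, _, .record sr, n, j => by
      rw [coSubPres, List.length_append, coSubRowLab_length, coSubRowComp_length, npres,
        npresRow_eq]

theorem coSubRowComp_length : ∀ {R R' : List (Label × Ty)} (sr : CoSubRow R R') (n c : ℕ),
    (coSubRowComp sr n c).length = npresComps R
  | _, _, .nil, _, _ => rfl
  | _, _, .drop sr, n, c => by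
      rw [coSubRowComp, List.length_append, List.length_replicate, coSubRowComp_length sr,
        npresComps]
  | _, _, .keep s sr, n, c => by
      rw [coSubRowComp, List.length_append, coSubPres_length s, coSubRowComp_length sr,
        npresComps]

end

theorem projCompArgs_length (ℓ : Label) (R : List (Label × Ty)) :
    (projCompArgs ℓ R).length = npresComps R := by
  induction R with
  | nil => rfl
  | cons p R ih =>
    rw [projCompArgs, List.length_append, ih, npresComps]
    split_ifs <;> simp [varList_length]

def shiftPreN (m : ℕ) : Pre → Pre
  | .pvar i => .pvar (i + m)
  | P => P

theorem shiftPreN_zero : shiftPreN 0 = id := by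
  funext P; cases P <;> rfl

theorem shiftPreN_shiftPre (m : ℕ) (P : Pre) :
    shiftPreN m (shiftPre 0 P) = shiftPreN (m + 1) P := by
  cases P <;> simp [shiftPre, shiftPreN]; omega

theorem substPre_shiftPreN_succ (m : ℕ) (P E : Pre) :
    substPre m P (shiftPreN (m + 1) E) = shiftPreN m E := by
  cases E with
  | pvar i => simp only [substPre, shiftPreN]; rw [if_neg (by omega), if_neg (by omega)]; rfl
  | _ => rfl

theorem substPre_self (m : ℕ) (P : Pre) : substPre m P (.pvar m) = P := by
  simp [substPre]

theorem substPre_of_lt {k i : ℕ} (P : Pre) (h : i < k) : substPre k P (.pvar i) = .pvar i := by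
  simp [substPre, h, h.ne]

theorem shiftPre_of_lt {c i : ℕ} (h : i < c) : shiftPre c (.pvar i) = .pvar i := by
  simp [shiftPre, h]

theorem shiftPTy_pallN (m c : ℕ) (C : PTy) :
    shiftPTy c (pallN m C) = pallN m (shiftPTy (c + m) C) := by
  induction m generalizing c with
  | zero => rfl
  | succ m ih => rw [pallN, shiftPTy, ih, Nat.add_right_comm]; rfl

theorem substPTy_pallN (m k : ℕ) (P : Pre) (C : PTy) :
    substPTy k P (pallN m C) = pallN m (substPTy (k + m) (shiftPreN m P) C) := by
  induction m generalizing k P with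
  | zero => rw [shiftPreN_zero, id]; rfl
  | succ m ih => rw [pallN, substPTy, ih, shiftPreN_shiftPre, Nat.add_right_comm]; rfl

mutual

theorem shiftPTy_trTyBody : ∀ (A : Ty) (Qs : List Pre) (c : ℕ),
    shiftPTy c (trTyBody A Qs) = trTyBody A (Qs.map (shiftPre c))
  | .tvar n, Qs, c => by rw [trTyBody, trTyBody, shiftPTy]
  | .arrow A B, Qs, c => by
      rw [trTyBody, trTyBody, shiftPTy, shiftPTy_pallN, shiftPTy_trTyBody A,
        varList_map_eq_self fun i hi => shiftPre_of_lt (by omega), shiftPTy_trTyBody B]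
  | .record R, Qs, c => by
      rw [trTyBody, trTyBody, shiftPTy, shiftPEs_trRowBody, List.map_take, List.map_drop]

theorem shiftPEs_trRowBody : ∀ (R : List (Label × Ty)) (Pl Pc : List Pre) (c : ℕ),
    shiftPEs c (trRowBody R Pl Pc) = trRowBody R (Pl.map (shiftPre c)) (Pc.map (shiftPre c))
  | [], _, _, _ => by rw [trRowBody, trRowBody, shiftPEs]
  | (ℓ, A) :: R, Pl, Pc, c => by
      rw [trRowBody, trRowBody, shiftPEs, shiftPTy_trTyBody A, shiftPEs_trRowBody R,
        List.map_take, List.map_tail, List.map_drop]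
      cases Pl <;> rfl

end

mutual

theorem substPTy_trTyBody : ∀ (A : Ty) (Qs : List Pre) (k : ℕ) (P : Pre),
    substPTy k P (trTyBody A Qs) = trTyBody A (Qs.map (substPre k P))
  | .tvar n, Qs, k, P => by rw [trTyBody, trTyBody, substPTy]
  | .arrow A B, Qs, k, P => by
      rw [trTyBody, trTyBody, substPTy, substPTy_pallN, substPTy_trTyBody A,
        varList_map_eq_self fun i hi => substPre_of_lt _ (by omega), substPTy_trTyBody B]
  | .record R, Qs, k, P => by
      rw [trTyBody, trTyBody, substPTy, substPEs_trRowBody, List.map_take, List.map_drop]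

theorem substPEs_trRowBody : ∀ (R : List (Label × Ty)) (Pl Pc : List Pre) (k : ℕ) (P : Pre),
    substPEs k P (trRowBody R Pl Pc) =
      trRowBody R (Pl.map (substPre k P)) (Pc.map (substPre k P))
  | [], _, _, _, _ => by rw [trRowBody, trRowBody, substPEs]
  | (ℓ, A) :: R, Pl, Pc, k, P => by
      rw [trRowBody, trRowBody, substPEs, substPTy_trTyBody A, substPEs_trRowBody R,
        List.map_take, List.map_tail, List.map_drop]
      cases Pl <;> rfl

end

theorem shiftPTy_trTy (c : ℕ) (A : Ty) : shiftPTy c (trTy A) = trTy A := by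
  rw [trTy, shiftPTy_pallN, shiftPTy_trTyBody,
    varList_map_eq_self fun i hi => shiftPre_of_lt (by omega)]

theorem map_substPre_shiftPreN_append_varList (k : ℕ) (P : Pre) (Es : List Pre) :
    (Es.map (shiftPreN (k + 1)) ++ varList (k + 1)).map (substPre k (shiftPreN k P)) =
      (Es ++ [P]).map (shiftPreN k) ++ varList k := by
  rw [List.map_append, List.map_map, varList_succ, List.map_cons, substPre_self,
    varList_map_eq_self fun i hi => substPre_of_lt _ hi]
  simp [Function.comp_def, substPre_shiftPreN_succ]

theorem PHasTy.plamN_pallN {Δ : List PTy} {M : PTm} {C : PTy} (hΔ : Δ.map (shiftPTy 0) = Δ)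
    (n : ℕ) (h : PHasTy Δ M C) : PHasTy Δ (plamN n M) (pallN n C) := by
  induction n with
  | zero => exact h
  | succ n ih => exact .plam (by rwa [hΔ])

theorem map_trTy_shiftPTy (Γ : List Ty) : (Γ.map trTy).map (shiftPTy 0) = Γ.map trTy := by
  simp [Function.comp_def, shiftPTy_trTy]

-- Generalized over the already instantiated prefix `Es`, seen from under the remaining binders.
theorem PHasTy.papps_trTyBody {Δ : List PTy} {A : Ty} (Ps : List Pre) :
    ∀ {M : PTm} (Es : List Pre),
      PHasTy Δ M (pallN Ps.length
        (trTyBody A (Es.map (shiftPreN Ps.length) ++ varList Ps.length))) →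
      PHasTy Δ (papps M Ps) (trTyBody A (Es ++ Ps)) := by
  induction Ps with
  | nil => intro M Es h; simpa [papps, pallN, shiftPreN_zero, varList] using h
  | cons P Ps ih =>
    intro M Es h
    have hP := PHasTy.papp (P := P) h
    rw [List.length_cons, substPTy_pallN, substPTy_trTyBody, Nat.zero_add,
      map_substPre_shiftPreN_append_varList] at hP
    have hPs := ih (Es ++ [P]) hP
    rwa [List.append_assoc, List.singleton_append] at hPs

theorem PHasTy.papps_trTy {Δ : List PTy} {M : PTm} {A : Ty} {Ps : List Pre}
    (h : PHasTy Δ M (trTy A)) (hPs : Ps.length = npres A) :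
    PHasTy Δ (papps M Ps) (trTyBody A Ps) := by
  rw [trTy, ← hPs] at h
  simpa using h.papps_trTyBody Ps []

def FieldHasTy (Δ : List PTy) (p : Label × PTm) (q : Label × Pre × PTy) : Prop :=
  p.1 = q.1 ∧ PHasTy Δ p.2 q.2.2

def FieldEquiv (p q : Label × Pre × PTy) : Prop :=
  (p.1, p.2.1) = (q.1, q.2.1) ∧ PTyEquiv p.2.2 q.2.2

theorem PHasTy.record_of_forall₂ {Δ : List PTy} {es : List (Label × PTm)}
    {res : List (Label × Pre × PTy)}
    (h : List.Forall₂ (FieldHasTy Δ) es res) :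
    PHasTy Δ (.record es (.record res)) (.record res) :=
  .record (h.imp fun _ _ hpq => hpq.1).map_eq_map
    fun _ _ _ hp hq => (h.rel_of_getElem? hp hq).2

theorem PTyEquiv.record_of_forall₂ {es es' : List (Label × Pre × PTy)}
    (h : List.Forall₂ FieldEquiv es es') :
    PTyEquiv (.record es) (.record es') :=
  .recordCongr (h.imp fun _ _ hpq => hpq.1).map_eq_map
    fun _ _ _ hp hq => (h.rel_of_getElem? hp hq).2

def Pre.isAbs : Pre → Bool
  | .abs => true
  | _ => false

theorem PTyEquiv.record_filter_not_isAbs (es : List (Label × Pre × PTy)) :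
    PTyEquiv (.record es) (.record (es.filter fun q => !q.2.1.isAbs)) := by
  suffices ∀ pre : List (Label × Pre × PTy),
      PTyEquiv (.record (pre ++ es)) (.record (pre ++ es.filter fun q => !q.2.1.isAbs)) by
    simpa using this []
  induction es with
  | nil => exact fun _ => .refl _
  | cons q es ih =>
    obtain ⟨ℓ, P, B⟩ := q
    intro pre
    cases P with
    | abs =>
      rw [List.filter_cons_of_neg (by simp [Pre.isAbs])]
      exact PTyEquiv.recordAbsent.trans (ih pre)
    | pres | pvar _ =>
      rw [List.filter_cons_of_pos rfl, List.append_cons pre _ es,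
        List.append_cons pre _ (es.filter _)]
      exact ih _

theorem trTyBody_record_append {R : List (Label × Ty)} {Pl : List Pre} (Pc : List Pre)
    (hPl : Pl.length = R.length) :
    trTyBody (.record R) (Pl ++ Pc) = .record (trRowBody R Pl Pc) := by
  rw [trTyBody, ← hPl, List.take_left, List.drop_left]

theorem trTy_record (R : List (Label × Ty)) :
    trTy (.record R) = pallN (npresRow R) (.record (trRowBody R
      ((varList (npresRow R)).take R.length) ((varList (npresRow R)).drop R.length))) :=
  rfl

theorem varList_npresRow_drop (R : List (Label × Ty)) :
    (varList (npresRow R)).drop R.length = slotVars (npresRow R) R.length (npresComps R) := by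
  rw [← slotVars_eq_varList (c := 0) (Nat.zero_add _), slotVars_drop, Nat.zero_add,
    npresRow_eq, Nat.add_sub_cancel_left]

mutual

theorem trTyBody_coSubPres_equiv : ∀ {A B : Ty} (s : CoSub A B) (n j : ℕ),
    PTyEquiv (trTyBody A (coSubPres s n j)) (trTyBody B (slotVars n j (npres B)))
  | _, _, .tvar _, _, _ => .refl _
  | _, _, .arrow s, n, j => by
      rw [coSubPres, trTyBody, trTyBody, npres]
      exact .arrow (.refl _) (trTyBody_coSubPres_equiv s n j)
  | _, _, .record (R := R) (R' := R') sr, n, j => by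
      rw [coSubPres, trTyBody_record_append _ (coSubRowLab_length sr n j), trTyBody, npres,
        npresRow_eq, slotVars_take (by omega), slotVars_drop, Nat.add_sub_cancel_left]
      exact (PTyEquiv.record_filter_not_isAbs _).trans
        (.record_of_forall₂ (forall₂_fieldEquiv_coSubRow sr n j (j + R'.length)))

theorem forall₂_fieldEquiv_coSubRow : ∀ {R R' : List (Label × Ty)} (sr : CoSubRow R R')
    (n j c : ℕ), List.Forall₂ FieldEquiv
      ((trRowBody R (coSubRowLab sr n j) (coSubRowComp sr n c)).filter fun q => !q.2.1.isAbs)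
      (trRowBody R' (slotVars n j R'.length) (slotVars n c (npresComps R')))
  | _, _, .nil, _, _, _ => by
      rw [coSubRowLab, coSubRowComp, trRowBody, trRowBody]
      exact .nil
  | _, _, .drop (A := A) sr, n, j, c => by
      rw [coSubRowLab, coSubRowComp, trRowBody, List.headD_cons, List.tail_cons,
        List.drop_left' (List.length_replicate ..), List.filter_cons_of_neg (by simp [Pre.isAbs])]
      exact forall₂_fieldEquiv_coSubRow sr n j c
  | _, _, .keep (A := A) (A' := A') (R' := R') s sr, n, j, c => by
      rw [coSubRowLab, coSubRowComp, trRowBody, List.headD_cons, List.tail_cons,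
        ← coSubPres_length s n c, List.take_left, List.drop_left,
        List.filter_cons_of_pos rfl, npresComps, List.length_cons, slotVars_succ, trRowBody,
        List.headD_cons, List.tail_cons, slotVars_take (by omega), slotVars_drop,
        Nat.add_sub_cancel_left]
      exact .cons ⟨rfl, trTyBody_coSubPres_equiv s n c⟩
        (forall₂_fieldEquiv_coSubRow sr n (j + 1) (c + npres A'))

end

theorem lookup_trRowBody_projArgs {ℓ : Label} {A : Ty} :
    ∀ {R : List (Label × Ty)}, R.lookup ℓ = some A →
      (trRowBody R (R.map fun p => if p.1 == ℓ then .pres else .abs) (projCompArgs ℓ R)).lookup ℓ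
        = some (.pres, trTyBody A (varList (npres A)))
  | [], h => by simp [List.lookup] at h
  | (ℓ', A') :: R, h => by
      rw [List.map_cons, projCompArgs, trRowBody]
      by_cases hℓ : ℓ' = ℓ
      · subst hℓ
        simp only [List.lookup, beq_self_eq_true, Option.some.injEq] at h ⊢
        subst h
        simp [List.take_left' (varList_length _)]
      · have hb : (ℓ' == ℓ) = false := by simp [hℓ]
        have hb' : (ℓ == ℓ') = false := by simp [Ne.symm hℓ]
        simp only [List.lookup, hb'] at h
        simp only [List.lookup, hb, hb', Bool.false_eq_true, if_false, List.tail_cons,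
          List.drop_left' (List.length_replicate ..)]
        exact lookup_trRowBody_projArgs h

section Cases

variable {Γ : List Ty} {M N : PTm} {A B : Ty}

theorem trLam_hasTy (h : PHasTy (trTy A :: Γ.map trTy) M (trTy B)) :
    PHasTy (Γ.map trTy) (plamN (npres B) (.lam (trTy A) (papps M (varList (npres B)))))
      (trTy (.arrow A B)) :=
  .plamN_pallN (map_trTy_shiftPTy Γ) _ (.lam (h.papps_trTy (varList_length _)))

theorem trApp_hasTy (h₁ : PHasTy (Γ.map trTy) M (trTy (.arrow A B)))
    (h₂ : PHasTy (Γ.map trTy) N (trTy A)) :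
    PHasTy (Γ.map trTy) (plamN (npres B) (.app (papps M (varList (npres B))) N)) (trTy B) :=
  .plamN_pallN (map_trTy_shiftPTy Γ) _ (.app (h₁.papps_trTy (varList_length _)) h₂)

theorem trRecord_hasTy {R : List (Label × Ty)} {es : List (Label × PTm)}
    (h : List.Forall₂ (FieldHasTy (Γ.map trTy)) es
      (trRowBody R ((varList (npresRow R)).take R.length)
        (slotVars (npresRow R) R.length (npresComps R)))) :
    PHasTy (Γ.map trTy) (plamN (npresRow R) (.record es (.record (trRowBody R
      ((varList (npresRow R)).take R.length) ((varList (npresRow R)).drop R.length)))))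
      (trTy (.record R)) := by
  rw [trTy_record, varList_npresRow_drop]
  exact .plamN_pallN (map_trTy_shiftPTy Γ) _ (.record_of_forall₂ h)

theorem trProj_hasTy {R : List (Label × Ty)} {ℓ : Label}
    (h : PHasTy (Γ.map trTy) M (trTy (.record R))) (hℓ : R.lookup ℓ = some A) :
    PHasTy (Γ.map trTy) (plamN (npres A) (.proj (papps M
      ((R.map fun p => if p.1 == ℓ then .pres else .abs) ++ projCompArgs ℓ R)) ℓ)) (trTy A) := by
  have hM := h.papps_trTy
    (Ps := (R.map fun p => if p.1 == ℓ then .pres else .abs) ++ projCompArgs ℓ R) (by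
    rw [List.length_append, List.length_map, projCompArgs_length, npres, npresRow_eq])
  rw [trTyBody_record_append _ (List.length_map _)] at hM
  exact .plamN_pallN (map_trTy_shiftPTy Γ) _ (.proj hM (lookup_trRowBody_projArgs hℓ))

theorem trUpcast_hasTy (h : PHasTy (Γ.map trTy) M (trTy A)) (s : CoSub A B) :
    PHasTy (Γ.map trTy) (plamN (npres B) (papps M (coSubPres s (npres B) 0))) (trTy B) := by
  have hB := trTyBody_coSubPres_equiv s (npres B) 0
  rw [slotVars_eq_varList (Nat.zero_add _)] at hB
  exact .plamN_pallN (map_trTy_shiftPTy Γ) _ (.conv (h.papps_trTy (coSubPres_length s _ _)) hB)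

theorem forall₂_fieldHasTy_cons {R : List (Label × Ty)} {es : List (Label × PTm)} {ℓ : Label}
    {n c : ℕ} (h : PHasTy (Γ.map trTy) M (trTy A))
    (hes : ∀ Pl, List.Forall₂ (FieldHasTy (Γ.map trTy)) es
      (trRowBody R Pl (slotVars n (c + npres A) (npresComps R))))
    (Pl : List Pre) :
    List.Forall₂ (FieldHasTy (Γ.map trTy)) ((ℓ, papps M (slotVars n c (npres A))) :: es)
      (trRowBody ((ℓ, A) :: R) Pl (slotVars n c (npresComps ((ℓ, A) :: R)))) := by
  rw [npresComps, trRowBody, slotVars_take (by omega), slotVars_drop, Nat.add_sub_cancel_left]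
  exact .cons ⟨rfl, h.papps_trTy (slotVars_length _ _ _)⟩ (hes _)

end Cases

theorem type_preservation {Γ : List Ty} {M : Tm} {A : Ty}
    (d : Deriv Γ M A) : PHasTy (Γ.map trTy) (trD d) (trTy A) := by
  apply Deriv.rec (motive_1 := fun Γ _ A d => PHasTy (Γ.map trTy) (trD d) (trTy A))
    (motive_2 := fun Γ _ R dr => ∀ n c Pl, List.Forall₂ (FieldHasTy (Γ.map trTy))
      (trDRow dr n c) (trRowBody R Pl (slotVars n c (npresComps R))))
  case var => exact fun h => .var (by simp [h])
  case lam => exact fun _ ih => trLam_hasTy ih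
  case app => exact fun _ _ ih₁ ih₂ => trApp_hasTy ih₁ ih₂
  case record => exact fun _ ih => trRecord_hasTy (ih _ _ _)
  case proj => exact fun _ hℓ ih => trProj_hasTy ih hℓ
  case upcast => exact fun _ s ih => trUpcast_hasTy ih s
  case nil => exact fun _ _ _ => .nil
  case cons => exact fun _ _ ih ihs _ _ => forall₂_fieldHasTy_cons ih (ihs _ _)

end Stmt16
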